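/- arXiv:2010.02760 — 3 statements merged into one kernel-verified Lean document; each statement's English description precedes it below -/
import Mathlib

section
/- Let G be a connected simple graph on n vertices of diameter greater than 3 whose complement G^c is connected, and let u, v be vertices of G with d_G(u,v) > 3. Let s and t be positive integers with s + t = n - 2, s ≥ deg_G(u) and t ≥ deg_G(v). Then λ1(G^c) < λ1(H^c(s,t)). -/
open SimpleGraph Finset

/-- Distance matrix of a graph. -/
noncomputable def distMatrix {V : Type*} [Fintype V] (G : SimpleGraph V) : Matrix V V ℝ :=
  Matrix.of fun u v => (G.dist u v : ℝ)

/-- Largest eigenvalue of the distance matrix (distance spectral radius). -/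
noncomputable def lam1 {V : Type*} [Fintype V] (G : SimpleGraph V) : ℝ :=
  sSup {μ : ℝ | ∃ x : V → ℝ, x ≠ 0 ∧ (distMatrix G).mulVec x = μ • x}

/-- Least eigenvalue of the distance matrix. -/
noncomputable def lamMin {V : Type*} [Fintype V] (G : SimpleGraph V) : ℝ :=
  sInf {μ : ℝ | ∃ x : V → ℝ, x ≠ 0 ∧ (distMatrix G).mulVec x = μ • x}

/-- `H(s,t)`: complete graph on `s+t` vertices plus vertex `u = s+t` joined to the
first `s` clique vertices and vertex `v = s+t+1` joined to the remaining `t`. -/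
def Hgraph (s t : ℕ) : SimpleGraph (Fin (s + t + 2)) :=
  SimpleGraph.fromRel fun i j =>
    (i.val < s + t ∧ j.val < s + t) ∨
    (i.val = s + t ∧ j.val < s) ∨
    (i.val = s + t + 1 ∧ s ≤ j.val ∧ j.val < s + t)

/-- The double star `T(a,b)`: centers `0, 1`; `a` pendants on `0`, `b` pendants on `1`. -/
def Tdouble (a b : ℕ) : SimpleGraph (Fin (a + b + 2)) :=
  SimpleGraph.fromRel fun i j =>
    (i.val = 0 ∧ j.val = 1) ∨
    (i.val = 0 ∧ 2 ≤ j.val ∧ j.val < a + 2) ∨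
    (i.val = 1 ∧ a + 2 ≤ j.val)

/-- `T1(a,b)`: path `0-1-2` with `a` pendants on `0` and `b` pendants on `2`. -/
def T1graph (a b : ℕ) : SimpleGraph (Fin (a + b + 3)) :=
  SimpleGraph.fromRel fun i j =>
    (i.val = 0 ∧ j.val = 1) ∨ (i.val = 1 ∧ j.val = 2) ∨
    (i.val = 0 ∧ 3 ≤ j.val ∧ j.val < a + 3) ∨
    (i.val = 2 ∧ a + 3 ≤ j.val)

/-- `T2(a,b)`: the double star `T(a,b)` (centers `0,1`, pendants `2..a+1` on `0`,
`a+2..a+b+1` on `1`) with an extra pendant vertex `a+b+2` attached to the pendant `2`. -/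
def T2graph (a b : ℕ) : SimpleGraph (Fin (a + b + 3)) :=
  SimpleGraph.fromRel fun i j =>
    (i.val = 0 ∧ j.val = 1) ∨
    (i.val = 0 ∧ 2 ≤ j.val ∧ j.val < a + 2) ∨
    (i.val = 1 ∧ a + 2 ≤ j.val ∧ j.val < a + b + 2) ∨
    (i.val = 2 ∧ j.val = a + b + 2)

/-- `B1(p,q)`: complete bipartite graph with parts `{0,…,p-1}` and `{p,…,p+q-1}`
minus the edge between `u = 0` and `v = p`. -/
def B1graph (p q : ℕ) : SimpleGraph (Fin (p + q)) :=
  SimpleGraph.fromRel fun i j =>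
    i.val < p ∧ p ≤ j.val ∧ ¬(i.val = 0 ∧ j.val = p)

/-- `B2(p,q)`: `B1(p,q)` where all edges at `w = 1` except the edge to `v = p` are deleted. -/
def B2graph (p q : ℕ) : SimpleGraph (Fin (p + q)) :=
  SimpleGraph.fromRel fun i j =>
    i.val < p ∧ p ≤ j.val ∧ ¬(i.val = 0 ∧ j.val = p) ∧ (i.val = 1 → j.val = p)

/-- `L'` on `n` vertices: `K_{n-2}` on `{0,…,n-3}` minus the edge `wu` (`w = 0`, `u = 1`),
with a pendant `w' = n-2` at `w` and a pendant `v = n-1` at `u`. -/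
def L'graph (n : ℕ) : SimpleGraph (Fin n) :=
  SimpleGraph.fromRel fun i j =>
    (i.val < n - 2 ∧ j.val < n - 2 ∧ ¬(i.val = 0 ∧ j.val = 1) ∧ ¬(i.val = 1 ∧ j.val = 0)) ∨
    (i.val = 0 ∧ j.val = n - 2) ∨
    (i.val = 1 ∧ j.val = n - 1)

/-- `L(p,q)`: disjoint union of `K_p` on `{0,…,p-1}` (minus the edge `wu`, `w = 0`, `u = 1`)
and `K_q` on `{p,…,p+q-1}`, plus the edge from `u = 1` to `v = p`. -/
def Lgraph (p q : ℕ) : SimpleGraph (Fin (p + q)) :=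
  SimpleGraph.fromRel fun i j =>
    (i.val < p ∧ j.val < p ∧ ¬(i.val = 0 ∧ j.val = 1) ∧ ¬(i.val = 1 ∧ j.val = 0)) ∨
    (p ≤ i.val ∧ p ≤ j.val) ∨
    (i.val = 1 ∧ j.val = p)

/-- The star `K_{1,n-1}` on `n` vertices with center `0`. -/
def starGraph (n : ℕ) : SimpleGraph (Fin n) :=
  SimpleGraph.fromRel fun i _ => i.val = 0


/-!
Since `d(u,v) > 3`, the vertices `u`, `v` are non-adjacent without common neighbours, so with
`deg u ≤ s` and `deg v ≤ t` the vertices of `G` can be placed in `H(s,t)`: `u` and `v` on its two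
special vertices, `N(u)` among the `s` neighbours of the first and `N(v)` among the `t` neighbours
of the second. This makes `G` a spanning subgraph of a copy of `H(s,t)`, a proper one because the
special vertices of `H(s,t)` are at distance `3`. Complementing, a copy of the connected graph
`H(s,t)ᶜ` is a proper spanning subgraph of `Gᶜ`. Deleting edges from a connected graph increases
its distance matrix entrywise, strictly somewhere, and for symmetric nonnegative matrices with
positive off-diagonal entries the top eigenvalue is then strictly larger (Perron–Frobenius).
-/

open scoped MatrixOrder

namespace Matrix

variable {n : Type*} [Fintype n]

theorem mem_spectrum_iff_exists_mulVec_eq_smul [DecidableEq n] {K : Type*} [Field K]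
    (M : Matrix n n K) (μ : K) : μ ∈ spectrum K M ↔ ∃ x ≠ 0, M *ᵥ x = μ • x := by
  rw [← spectrum_toLin', ← Module.End.hasEigenvalue_iff_mem_spectrum,
    Module.End.hasEigenvalue_iff, Submodule.ne_bot_iff]
  simp only [Module.End.mem_eigenspace_iff, toLin'_apply]
  exact ⟨fun ⟨x, hx, hx0⟩ => ⟨x, hx0, hx⟩, fun ⟨x, hx0, hx⟩ => ⟨x, hx, hx0⟩⟩

theorem dotProduct_mulVec_eq_sum {R : Type*} [CommSemiring R] (M : Matrix n n R) (x : n → R) :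
    x ⬝ᵥ M *ᵥ x = ∑ i, ∑ j, M i j * (x i * x j) := by
  simp only [dotProduct, mulVec, Finset.mul_sum]
  exact Finset.sum_congr rfl fun i _ => Finset.sum_congr rfl fun j _ => by ring

theorem dotProduct_mulVec_nonneg_of_nonneg {C : Matrix n n ℝ} (hC : ∀ i j, 0 ≤ C i j)
    {x : n → ℝ} (hx : ∀ i, 0 ≤ x i) : 0 ≤ x ⬝ᵥ C *ᵥ x := by
  rw [dotProduct_mulVec_eq_sum]
  exact sum_nonneg fun i _ => sum_nonneg fun j _ => mul_nonneg (hC i j) (mul_nonneg (hx i) (hx j))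

theorem dotProduct_mulVec_pos_of_nonneg_of_ne_zero {C : Matrix n n ℝ} (hC : ∀ i j, 0 ≤ C i j)
    (hC0 : C ≠ 0) {x : n → ℝ} (hx : ∀ i, 0 < x i) : 0 < x ⬝ᵥ C *ᵥ x := by
  obtain ⟨i, j, hij⟩ : ∃ i j, C i j ≠ 0 := by
    by_contra! h
    exact hC0 (Matrix.ext h)
  have hterm (i j : n) : 0 ≤ C i j * (x i * x j) :=
    mul_nonneg (hC i j) (mul_pos (hx i) (hx j)).le
  rw [dotProduct_mulVec_eq_sum]
  refine sum_pos' (fun i _ => sum_nonneg fun j _ => hterm i j) ⟨i, mem_univ _, ?_⟩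
  exact sum_pos' (fun j _ => hterm i j)
    ⟨j, mem_univ _, mul_pos ((hC i j).lt_of_ne' hij) (mul_pos (hx i) (hx j))⟩

theorem dotProduct_mulVec_le_abs {A : Matrix n n ℝ} (hA : ∀ i j, 0 ≤ A i j) (x : n → ℝ) :
    x ⬝ᵥ A *ᵥ x ≤ |x| ⬝ᵥ A *ᵥ |x| := by
  rw [dotProduct_mulVec_eq_sum, dotProduct_mulVec_eq_sum]
  refine sum_le_sum fun i _ => sum_le_sum fun j _ => mul_le_mul_of_nonneg_left ?_ (hA i j)
  simpa only [Pi.abs_apply, abs_mul] using le_abs_self (x i * x j)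

theorem pos_of_mulVec_eq_smul {B : Matrix n n ℝ} (hB : ∀ i j, i ≠ j → 0 < B i j) {y : n → ℝ}
    (hy : ∀ i, 0 ≤ y i) (hy0 : y ≠ 0) {μ : ℝ} (hBy : B *ᵥ y = μ • y) (i : n) : 0 < y i := by
  refine (hy i).lt_of_ne fun hyi => hy0 (funext fun j => ?_)
  have hterm (k : n) : 0 ≤ B i k * y k := by
    rcases eq_or_ne i k with rfl | hik
    · simp [← hyi]
    · exact mul_nonneg (hB i k hik).le (hy k)
  have hsum : ∑ k, B i k * y k = 0 := by
    simpa [mulVec, dotProduct, ← hyi] using congrFun hBy i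
  have hzero := (sum_eq_zero_iff_of_nonneg fun k _ => hterm k).mp hsum j (mem_univ j)
  rcases eq_or_ne i j with rfl | hij
  · exact hyi.symm
  · exact (mul_eq_zero.mp hzero).resolve_left (hB i j hij).ne'

theorem star_dotProduct_algebraMap_sub_mulVec [DecidableEq n] (M : Matrix n n ℝ) (c : ℝ)
    (x : n → ℝ) :
    star x ⬝ᵥ (algebraMap ℝ (Matrix n n ℝ) c - M) *ᵥ x = c * (x ⬝ᵥ x) - x ⬝ᵥ M *ᵥ x := by
  rw [sub_mulVec, Algebra.algebraMap_eq_smul_one, smul_mulVec, one_mulVec, star_trivial,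
    dotProduct_sub, dotProduct_smul, smul_eq_mul]

namespace IsHermitian

variable [DecidableEq n] {M : Matrix n n ℝ}

theorem sSup_spectrum_mem [Nonempty n] (hM : M.IsHermitian) :
    sSup (spectrum ℝ M) ∈ spectrum ℝ M := by
  refine Set.Nonempty.csSup_mem ?_ M.finite_real_spectrum
  rw [hM.spectrum_real_eq_range_eigenvalues]
  exact Set.range_nonempty _

theorem posSemidef_sSup_spectrum_sub (hM : M.IsHermitian) :
    (algebraMap ℝ (Matrix n n ℝ) (sSup (spectrum ℝ M)) - M).PosSemidef :=
  le_algebraMap_of_spectrum_le (fun _ hx => le_csSup M.finite_real_spectrum.bddAbove hx) hM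

theorem dotProduct_mulVec_le_sSup_spectrum (hM : M.IsHermitian) (x : n → ℝ) :
    x ⬝ᵥ M *ᵥ x ≤ sSup (spectrum ℝ M) * (x ⬝ᵥ x) := by
  have h := hM.posSemidef_sSup_spectrum_sub.dotProduct_mulVec_nonneg x
  rw [star_dotProduct_algebraMap_sub_mulVec] at h
  linarith

theorem mulVec_eq_sSup_spectrum_smul (hM : M.IsHermitian) {x : n → ℝ}
    (hx : x ⬝ᵥ M *ᵥ x = sSup (spectrum ℝ M) * (x ⬝ᵥ x)) : M *ᵥ x = sSup (spectrum ℝ M) • x := by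
  have h := (hM.posSemidef_sSup_spectrum_sub.dotProduct_mulVec_zero_iff x).mp
    (by rw [star_dotProduct_algebraMap_sub_mulVec, hx, sub_self])
  rw [sub_mulVec, Algebra.algebraMap_eq_smul_one, smul_mulVec, one_mulVec, sub_eq_zero] at h
  exact h.symm

end IsHermitian

/-- Test `B` on `y = |x|` for a top eigenvector `x` of `A`: equality would make `y` a top
eigenvector of `B`, hence positive, and a positive `y` detects the gap `B - A ≠ 0`. -/
theorem sSup_spectrum_lt_of_le_of_ne [DecidableEq n] [Nonempty n] {A B : Matrix n n ℝ}
    (hA : A.IsHermitian) (hB : B.IsHermitian) (hA0 : ∀ i j, 0 ≤ A i j)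
    (hAB : ∀ i j, A i j ≤ B i j) (hB_pos : ∀ i j, i ≠ j → 0 < B i j) (hne : A ≠ B) :
    sSup (spectrum ℝ A) < sSup (spectrum ℝ B) := by
  set α := sSup (spectrum ℝ A)
  obtain ⟨x, hx0, hAx⟩ := (mem_spectrum_iff_exists_mulVec_eq_smul A α).mp hA.sSup_spectrum_mem
  set y := |x|
  have hy (i : n) : 0 ≤ y i := abs_nonneg (x i)
  have hy0 : y ≠ 0 := by simpa [y] using hx0
  have hyy : y ⬝ᵥ y = x ⬝ᵥ x := by simp [y, dotProduct, abs_mul_abs_self]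
  have hxx : 0 < x ⬝ᵥ x := by
    simpa [dotProduct_comm] using (dotProduct_self_star_pos_iff (v := x)).mpr hx0
  have hBA : y ⬝ᵥ A *ᵥ y ≤ y ⬝ᵥ B *ᵥ y := by
    have := dotProduct_mulVec_nonneg_of_nonneg (C := B - A) (fun i j => sub_nonneg.2 (hAB i j))
      hy
    rwa [sub_mulVec, dotProduct_sub, sub_nonneg] at this
  have hαy : α * (y ⬝ᵥ y) ≤ y ⬝ᵥ A *ᵥ y := by
    rw [hyy, ← smul_eq_mul, ← dotProduct_smul, ← hAx]
    exact dotProduct_mulVec_le_abs hA0 x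
  have hβy := hB.dotProduct_mulVec_le_sSup_spectrum y
  refine lt_of_le_of_ne (le_of_mul_le_mul_right (hαy.trans (hBA.trans hβy)) (hyy ▸ hxx))
    fun hαβ => ?_
  have hBy := hB.mulVec_eq_sSup_spectrum_smul (le_antisymm hβy (hαβ ▸ hαy.trans hBA))
  have hpos := pos_of_mulVec_eq_smul hB_pos hy hy0 hBy
  have hgap := dotProduct_mulVec_pos_of_nonneg_of_ne_zero (C := B - A)
    (fun i j => sub_nonneg.2 (hAB i j)) (sub_ne_zero.2 hne.symm) hpos
  rw [sub_mulVec, dotProduct_sub, sub_pos] at hgap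
  rw [← hαβ] at hβy
  linarith

end Matrix

namespace SimpleGraph

variable {V W : Type*} {G : SimpleGraph V} {H : SimpleGraph W}

theorem edist_map_le (f : G →g H) (u v : V) : H.edist (f u) (f v) ≤ G.edist u v := by
  by_cases h : G.Reachable u v
  · obtain ⟨p, hp⟩ := h.exists_walk_length_eq_edist
    exact hp ▸ (edist_le (p.map f)).trans_eq (by rw [Walk.length_map])
  · rw [edist_eq_top_of_not_reachable h]
    exact le_top

theorem Iso.edist_eq (e : G ≃g H) (u v : V) : H.edist (e u) (e v) = G.edist u v :=
  le_antisymm (edist_map_le e.toHom u v)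
    (by simpa using edist_map_le e.symm.toHom (e u) (e v))

theorem Iso.dist_eq (e : G ≃g H) (u v : V) : H.dist (e u) (e v) = G.dist u v := by
  rw [dist, dist, e.edist_eq]

theorem disjoint_neighborFinset_of_two_lt_dist [Fintype V] [DecidableRel G.Adj] {u v : V}
    (huv : 2 < G.dist u v) :
    Disjoint (G.neighborFinset u) (G.neighborFinset v) := by
  refine Finset.disjoint_left.2 fun w hu hv => ?_
  rw [mem_neighborFinset] at hu hv
  have := dist_le (hu.toWalk.append hv.symm.toWalk)
  simp only [Walk.length_append, Adj.length_toWalk] at this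
  omega

theorem compl_comap (φ : V ≃ W) (H : SimpleGraph W) : (H.comap φ)ᶜ = Hᶜ.comap φ := by
  ext a b
  simp [φ.injective.eq_iff]

end SimpleGraph

section DistanceSpectrum

variable {V W : Type*} [Fintype V] [Fintype W]

theorem distMatrix_isHermitian (G : SimpleGraph V) : (distMatrix G).IsHermitian := by
  ext i j
  simp [distMatrix, SimpleGraph.dist_comm]

theorem distMatrix_injective :
    Function.Injective (distMatrix : SimpleGraph V → Matrix V V ℝ) := by
  intro G H h
  ext a b
  have hab : G.dist a b = H.dist a b := by simpa [distMatrix] using congrFun (congrFun h a) b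
  rw [← dist_eq_one_iff_adj, ← dist_eq_one_iff_adj, hab]

theorem lam1_eq_sSup_spectrum [DecidableEq V] (G : SimpleGraph V) :
    lam1 G = sSup (spectrum ℝ (distMatrix G)) := by
  unfold lam1
  congr 1
  ext μ
  exact (Matrix.mem_spectrum_iff_exists_mulVec_eq_smul _ μ).symm

theorem lam1_congr {G : SimpleGraph V} {H : SimpleGraph W} (e : G ≃g H) : lam1 G = lam1 H := by
  classical
  have hD : distMatrix G = Matrix.reindexAlgEquiv ℝ ℝ e.toEquiv.symm (distMatrix H) := by
    ext a b
    simp [distMatrix, e.dist_eq]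
  rw [lam1_eq_sSup_spectrum, lam1_eq_sSup_spectrum, hD, AlgEquiv.spectrum_eq]

/-- Adding edges shortens distances, strictly at a new edge. -/
theorem lam1_lt_lam1_of_lt {G H : SimpleGraph V} (hG : G.Connected) (h : G < H) :
    lam1 H < lam1 G := by
  classical
  have := hG.nonempty
  rw [lam1_eq_sSup_spectrum, lam1_eq_sSup_spectrum]
  refine Matrix.sSup_spectrum_lt_of_le_of_ne (distMatrix_isHermitian H) (distMatrix_isHermitian G)
    (fun i j => by simp [distMatrix]) (fun i j => ?_) (fun i j hij => ?_)
    (fun hD => h.ne' (distMatrix_injective hD))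
  · simpa [distMatrix] using (hG.preconnected i j).dist_anti h.le
  · simpa [distMatrix] using hG.pos_dist_of_ne hij

end DistanceSpectrum

/-- Encodes the parts of `H(s,t)`: `0` for the neighbours of `u`, `1` for those of `v`,
`2` for `u` and `3` for `v`. -/
def hPart (s t : ℕ) (i : Fin (s + t + 2)) : Fin 4 :=
  if i.val < s then 0 else if i.val < s + t then 1 else if i.val = s + t then 2 else 3

def HPartAdj (a b : Fin 4) : Prop :=
  a ≤ 1 ∧ b ≤ 1 ∨ a = 2 ∧ b = 0 ∨ a = 0 ∧ b = 2 ∨ a = 3 ∧ b = 1 ∨ a = 1 ∧ b = 3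

section Hgraph

variable {s t : ℕ} {i j : Fin (s + t + 2)}

theorem hPart_eq_zero : hPart s t i = 0 ↔ i.val < s := by
  unfold hPart; split_ifs <;> simp_all

theorem hPart_eq_one : hPart s t i = 1 ↔ s ≤ i.val ∧ i.val < s + t := by
  unfold hPart; split_ifs <;> simp_all

theorem hPart_eq_two : hPart s t i = 2 ↔ i.val = s + t := by
  unfold hPart; split_ifs <;> simp_all <;> omega

theorem hPart_eq_three : hPart s t i = 3 ↔ i.val = s + t + 1 := by
  unfold hPart; split_ifs <;> simp_all <;> omega

theorem card_hPart_fiber (s t : ℕ) (k : Fin 4) :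
    Fintype.card {i // hPart s t i = k} = ![s, t, 1, 1] k := by
  rw [Fintype.card_subtype]
  fin_cases k <;> dsimp only
  · simp only [Fin.zero_eta, hPart_eq_zero, Fin.card_filter_val_lt]
    exact min_eq_right (by omega)
  · simp only [Fin.mk_one, hPart_eq_one]
    have hIco : ({i | s ≤ i.val ∧ i.val < s + t} : Finset (Fin (s + t + 2))) =
        Ico ⟨s, by omega⟩ ⟨s + t, by omega⟩ := by
      ext; simp [Fin.le_def, Fin.lt_def]
    rw [hIco, Fin.card_Ico]
    simp
  · simp only [Fin.reduceFinMk, hPart_eq_two]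
    exact card_eq_one.2 ⟨⟨s + t, by omega⟩, by ext; simp [Fin.ext_iff]⟩
  · simp only [Fin.reduceFinMk, hPart_eq_three]
    exact card_eq_one.2 ⟨⟨s + t + 1, by omega⟩, by ext; simp [Fin.ext_iff]⟩

theorem Hgraph_adj_iff : (Hgraph s t).Adj i j ↔ i ≠ j ∧ HPartAdj (hPart s t i) (hPart s t j) := by
  have := i.isLt
  have := j.isLt
  simp only [Hgraph, fromRel_adj, hPart, HPartAdj, ne_eq, and_congr_right_iff]
  intro _
  split_ifs <;> simp <;> omega

theorem Hgraph_adj_of_hPart_ne (hij : hPart s t i ≠ hPart s t j)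
    (h : HPartAdj (hPart s t i) (hPart s t j)) : (Hgraph s t).Adj i j :=
  Hgraph_adj_iff.2 ⟨fun h => hij (h ▸ rfl), h⟩

theorem Hgraph_compl_adj_of_hPart_ne (hij : hPart s t i ≠ hPart s t j)
    (h : ¬HPartAdj (hPart s t i) (hPart s t j)) : (Hgraph s t)ᶜ.Adj i j := by
  rw [compl_adj, Hgraph_adj_iff]
  exact ⟨fun h => hij (h ▸ rfl), fun h' => h h'.2⟩

theorem Hgraph_compl_connected (s t : ℕ) : (Hgraph s t)ᶜ.Connected := by
  let c : Fin (s + t + 2) := ⟨s + t, by omega⟩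
  let d : Fin (s + t + 2) := ⟨s + t + 1, by omega⟩
  have hc : hPart s t c = 2 := hPart_eq_two.2 rfl
  have hd : hPart s t d = 3 := hPart_eq_three.2 rfl
  have hdc : (Hgraph s t)ᶜ.Adj d c :=
    Hgraph_compl_adj_of_hPart_ne (by simp [hc, hd]) (by simp [hc, hd, HPartAdj])
  have hreach (i : Fin (s + t + 2)) : (Hgraph s t)ᶜ.Reachable i c := by
    generalize hk : hPart s t i = k
    fin_cases k
    · have hid : (Hgraph s t)ᶜ.Adj i d :=
        Hgraph_compl_adj_of_hPart_ne (by simp_all) (by simp_all [HPartAdj])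
      exact hid.reachable.trans hdc.reachable
    · exact (Hgraph_compl_adj_of_hPart_ne (j := c) (by simp_all) (by simp_all [HPartAdj])).reachable
    · rw [show i = c from Fin.ext (hPart_eq_two.1 hk)]
    · exact (Hgraph_compl_adj_of_hPart_ne (j := c) (by simp_all) (by simp_all [HPartAdj])).reachable
  exact ⟨fun i j => (hreach i).trans (hreach j).symm⟩

theorem Hgraph_dist_le_three (hs : 0 < s) (ht : 0 < t) (hi : hPart s t i = 2)
    (hj : hPart s t j = 3) : (Hgraph s t).dist i j ≤ 3 := by
  let a : Fin (s + t + 2) := ⟨0, by omega⟩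
  let b : Fin (s + t + 2) := ⟨s, by omega⟩
  have ha : hPart s t a = 0 := hPart_eq_zero.2 hs
  have hb : hPart s t b = 1 := hPart_eq_one.2 ⟨le_rfl, by simp [b]; omega⟩
  have hia : (Hgraph s t).Adj i a :=
    Hgraph_adj_of_hPart_ne (by simp [hi, ha]) (by simp [hi, ha, HPartAdj])
  have hab : (Hgraph s t).Adj a b :=
    Hgraph_adj_of_hPart_ne (by simp [ha, hb]) (by simp [ha, hb, HPartAdj])
  have hbj : (Hgraph s t).Adj b j :=
    Hgraph_adj_of_hPart_ne (by simp [hb, hj]) (by simp [hb, hj, HPartAdj])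
  simpa using dist_le (hia.toWalk.append (hab.toWalk.append hbj.toWalk))

end Hgraph

theorem exists_equiv_comp_eq_of_card_fiber_eq {α β γ : Type*} [Fintype α] [Fintype β]
    [DecidableEq γ] {f : α → γ} {g : β → γ}
    (h : ∀ c, Fintype.card {a // f a = c} = Fintype.card {b // g b = c}) :
    ∃ e : α ≃ β, ∀ a, g (e a) = f a :=
  ⟨Equiv.ofFiberEquiv fun c => Fintype.equivOfCardEq (h c), Equiv.ofFiberEquiv_map _⟩

section VertexPart

variable {V : Type*} [DecidableEq V] {G : SimpleGraph V} {u v : V} {A : Finset V}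

/-- The labelling of `V` by the parts of `H(s,t)` in which `A` plays the neighbours of `u`. -/
def vertexPart (u v : V) (A : Finset V) (a : V) : Fin 4 :=
  if a = u then 2 else if a = v then 3 else if a ∈ A then 0 else 1

theorem card_vertexPart_fiber [Fintype V] {s t : ℕ} (hcard : Fintype.card V = s + t + 2)
    (huv : u ≠ v) (hA : ∀ a ∈ A, a ≠ u ∧ a ≠ v) (hAcard : #A = s) (k : Fin 4) :
    Fintype.card {a // vertexPart u v A a = k} = ![s, t, 1, 1] k := by
  have hfiber : ({a | vertexPart u v A a = k} : Finset V) = ![A, ({u, v} ∪ A)ᶜ, {u}, {v}] k := by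
    refine Finset.ext fun a => ?_
    have := hA a
    simp only [mem_filter, mem_univ, true_and]
    unfold vertexPart
    fin_cases k <;> split_ifs <;> simp_all
  have hAuv : #({u, v} ∪ A) = 2 + s := by
    rw [card_union_of_disjoint, card_pair huv, hAcard]
    simp only [Finset.disjoint_left, mem_insert, mem_singleton]
    rintro a (rfl | rfl) ha
    exacts [(hA _ ha).1 rfl, (hA _ ha).2 rfl]
  rw [Fintype.card_subtype, hfiber]
  fin_cases k
  · exact hAcard
  · show #({u, v} ∪ A)ᶜ = t
    rw [card_compl, hAuv, hcard]
    omega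
  · exact card_singleton u
  · exact card_singleton v

theorem hPartAdj_vertexPart (hadj : ¬G.Adj u v) (hNu : ∀ a, G.Adj u a → a ∈ A)
    (hAv : ∀ a ∈ A, ¬G.Adj v a) {a b : V} (hab : G.Adj a b) :
    HPartAdj (vertexPart u v A a) (vertexPart u v A b) := by
  have hba := hab.symm
  unfold vertexPart
  split_ifs <;> simp_all [HPartAdj]

theorem exists_equiv_le_comap_Hgraph [Fintype V] [DecidableRel G.Adj] {s t : ℕ}
    (hcard : Fintype.card V = s + t + 2) (huv : u ≠ v) (hadj : ¬G.Adj u v)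
    (hdisj : Disjoint (G.neighborFinset u) (G.neighborFinset v))
    (hu : G.degree u ≤ s) (hv : G.degree v ≤ t) :
    ∃ φ : V ≃ Fin (s + t + 2), hPart s t (φ u) = 2 ∧ hPart s t (φ v) = 3 ∧
      G ≤ (Hgraph s t).comap φ := by
  obtain ⟨A, hNA, hA, hAcard⟩ :
      ∃ A, G.neighborFinset u ⊆ A ∧ A ⊆ ({u, v} ∪ G.neighborFinset v)ᶜ ∧ #A = s := by
    refine exists_subsuperset_card_eq (fun a ha => ?_) hu ?_
    · rw [mem_neighborFinset] at ha
      simp only [mem_compl, mem_union, mem_insert, mem_singleton, not_or]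
      exact ⟨⟨ha.ne', fun h => hadj (h ▸ ha)⟩,
        Finset.disjoint_left.1 hdisj ((mem_neighborFinset _ _ _).2 ha)⟩
    · have := card_union_le {u, v} (G.neighborFinset v)
      have := card_le_two (a := u) (b := v)
      rw [card_compl, hcard]
      rw [card_neighborFinset_eq_degree] at *
      omega
  simp only [subset_iff, mem_compl, mem_union, mem_insert, mem_singleton, not_or,
    mem_neighborFinset] at hNA hA
  have hfiber (k : Fin 4) :=
    (card_vertexPart_fiber hcard huv (fun a ha => (hA ha).1) hAcard k).trans
      (card_hPart_fiber s t k).symm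
  obtain ⟨φ, hφ⟩ := exists_equiv_comp_eq_of_card_fiber_eq hfiber
  refine ⟨φ, (hφ u).trans (by simp [vertexPart]), (hφ v).trans (by simp [vertexPart, huv.symm]),
    fun a b hab => ?_⟩
  rw [comap_adj, Hgraph_adj_iff, hφ, hφ]
  exact ⟨φ.injective.ne hab.ne,
    hPartAdj_vertexPart hadj (fun a h => hNA h) (fun a ha => (hA ha).2) hab⟩

end VertexPart

theorem stmt_2_general {V : Type*} [Fintype V] (n : ℕ) (G : SimpleGraph V)
    [DecidableRel G.Adj] (hcard : Fintype.card V = n)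
    (u v : V) (huv : 3 < G.dist u v)
    (s t : ℕ) (hs : 0 < s) (ht : 0 < t) (hst : s + t = n - 2)
    (hds : G.degree u ≤ s) (hdt : G.degree v ≤ t) :
    lam1 Gᶜ < lam1 (Hgraph s t)ᶜ := by
  classical
  have hne : u ≠ v := by
    rintro rfl
    simp at huv
  have hnadj : ¬G.Adj u v := fun h => by simp [dist_eq_one_iff_adj.2 h] at huv
  have hcard' : Fintype.card V = s + t + 2 := by
    have := Fintype.one_lt_card_iff.2 ⟨u, v, hne⟩
    omega
  obtain ⟨φ, hφu, hφv, hle⟩ := exists_equiv_le_comap_Hgraph hcard' hne hnadj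
    (disjoint_neighborFinset_of_two_lt_dist (by omega)) hds hdt
  have hlt : G < (Hgraph s t).comap φ := hle.lt_of_ne fun h => by
    have := ((Iso.comap φ _).dist_eq u v).symm.trans_le (Hgraph_dist_le_three hs ht hφu hφv)
    rw [← h] at this
    omega
  have e : ((Hgraph s t).comap φ)ᶜ ≃g (Hgraph s t)ᶜ := compl_comap φ (Hgraph s t) ▸ Iso.comap φ _
  calc lam1 Gᶜ < lam1 ((Hgraph s t).comap φ)ᶜ :=
        lam1_lt_lam1_of_lt (e.connected_iff.2 (Hgraph_compl_connected s t))
          (compl_lt_compl_iff_lt.2 hlt)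
    _ = lam1 (Hgraph s t)ᶜ := lam1_congr e

/-- For `G` connected on `n` vertices with `Gᶜ` connected, vertices `u, v`
with `d_G(u,v) > 3`, and positive `s, t` with `s + t = n - 2`, `s ≥ deg_G(u)`,
`t ≥ deg_G(v)`, one has `λ₁(Gᶜ) < λ₁(H(s,t)ᶜ)`. -/
theorem stmt_2 {V : Type*} [Fintype V] [DecidableEq V] (n : ℕ) (G : SimpleGraph V)
    [DecidableRel G.Adj] (hcard : Fintype.card V = n)
    (hconn : G.Connected) (hcc : Gᶜ.Connected)
    (u v : V) (huv : 3 < G.dist u v)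
    (s t : ℕ) (hs : 0 < s) (ht : 0 < t) (hst : s + t = n - 2)
    (hds : G.degree u ≤ s) (hdt : G.degree v ≤ t) :
    lam1 Gᶜ < lam1 (Hgraph s t)ᶜ :=
  stmt_2_general n G hcard u v huv s t hs ht hst hds hdt
end

section
/- Let n ≥ 5 and let s, t be positive integers with s + t = n - 2. Then λ1(H^c(s,t)) ≤ λ1(H^c(⌊n/2⌋ - 1, ⌈n/2⌉ - 1)), with equality if and only if {s, t} = {⌊n/2⌋ - 1, ⌈n/2⌉ - 1} (equivalently, H(s,t) is isomorphic to H(⌊n/2⌋ - 1, ⌈n/2⌉ - 1)). -/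
/-!
`H(s,t)ᶜ` is a double star: `u` and `v` are adjacent, `v` is joined to the `s` vertices of
`A` and `u` to the `t` vertices of `B`. Off the diagonal its distance matrix is constant on the
blocks of the partition `A, {v}, {u}, B`, so an eigenvector is either constant on the blocks, and
then descends to an eigenvector of the `4 × 4` quotient matrix, or differs on two twins in one
block, which forces the eigenvalue `-2`. The characteristic polynomial of the quotient depends only
on `m = s + t` and `P = s t`, and at positive `x` it strictly decreases in `P`; hence its largest
root, the spectral radius, is strictly increasing in `P`. For fixed `s + t` the product `s t` is
maximal exactly at the balanced split.
-/

open SimpleGraph Finset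

open Matrix

section Blowup

variable {V ι R : Type*} [Fintype V] [DecidableEq V] [Field R]

def blowupMatrix (p : V → ι) (f : ι → ι → R) : Matrix V V R :=
  Matrix.of fun i j => if i = j then 0 else f (p i) (p j)

/- Entry `(c, d)` is the sum of the entries of `blowupMatrix p f` in a row of block `c` over the
columns of block `d`; the `- 1` accounts for the zero diagonal. -/
def quotientMatrix [Fintype ι] [DecidableEq ι] (p : V → ι) (f : ι → ι → R) :
    Matrix ι ι R :=
  Matrix.of fun c d => ((Fintype.card {j // p j = d} : R) - if c = d then 1 else 0) * f c d

variable {p : V → ι} {f : ι → ι → R}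

lemma blowupMatrix_mulVec_sub_of_eq {i j : V} (hp : p i = p j) (hij : i ≠ j) (x : V → R) :
    (blowupMatrix p f *ᵥ x) i - (blowupMatrix p f *ᵥ x) j = f (p i) (p i) * (x j - x i) := by
  simp only [mulVec, dotProduct, ← Finset.sum_sub_distrib, blowupMatrix, of_apply]
  rw [Finset.sum_eq_add i j hij (fun k _ hk => by simp [hk.1.symm, hk.2.symm, hp])
    (by simp) (by simp)]
  simp only [↓reduceIte, zero_mul, Ne.symm hij, hp, zero_sub, hij, sub_zero]
  ring

variable [Fintype ι] [DecidableEq ι]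

lemma blowupMatrix_mulVec_comp (y : ι → R) :
    blowupMatrix p f *ᵥ (y ∘ p) = (quotientMatrix p f *ᵥ y) ∘ p := by
  ext i
  have hfib : ∑ j, f (p i) (p j) * y (p j)
      = ∑ c, (Fintype.card {j // p j = c} : R) * (f (p i) c * y c) := by
    rw [← Fintype.sum_fiberwise' p (fun c => f (p i) c * y c)]
    simp
  have hdiag : (blowupMatrix p f *ᵥ (y ∘ p)) i
      = ∑ j, f (p i) (p j) * y (p j) - f (p i) (p i) * y (p i) := by
    have hterm : ∀ j, (if i = j then 0 else f (p i) (p j)) * y (p j)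
        = f (p i) (p j) * y (p j) - if i = j then f (p i) (p i) * y (p i) else 0 := by
      intro j; split_ifs with h <;> simp [h]
    simp [mulVec, dotProduct, blowupMatrix, hterm, Finset.sum_sub_distrib]
  rw [hdiag, hfib]
  simp [mulVec, dotProduct, quotientMatrix, sub_mul, Finset.sum_sub_distrib, mul_assoc]

lemma det_smul_one_sub_eq_zero_iff {Q : Matrix ι ι R} {μ : R} :
    (μ • 1 - Q).det = 0 ↔ ∃ y ≠ 0, Q *ᵥ y = μ • y := by
  rw [← exists_mulVec_eq_zero_iff]
  simp only [sub_mulVec, smul_mulVec, one_mulVec, sub_eq_zero, eq_comm]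

theorem eigenvalue_blowupMatrix_cases (hp : Function.Surjective p) {μ : R} {x : V → R}
    (hx : x ≠ 0) (h : blowupMatrix p f *ᵥ x = μ • x) :
    (∃ c, μ = -f c c) ∨ (μ • 1 - quotientMatrix p f).det = 0 := by
  by_cases hconst : ∀ i j, p i = p j → x i = x j
  · right
    set y := x ∘ Function.surjInv hp
    have hxy : x = y ∘ p := funext fun i => hconst _ _ (Function.surjInv_eq hp (p i)).symm
    refine det_smul_one_sub_eq_zero_iff.2
      ⟨y, fun hy => hx (by rw [hxy, hy]; rfl), funext fun c => ?_⟩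
    have := congrFun h (Function.surjInv hp c)
    rw [hxy, blowupMatrix_mulVec_comp] at this
    simpa [Function.surjInv_eq hp c] using this
  · left
    push Not at hconst
    obtain ⟨i, j, hpij, hne⟩ := hconst
    have hij : i ≠ j := fun h => hne (h ▸ rfl)
    have hsub := blowupMatrix_mulVec_sub_of_eq (f := f) hpij hij x
    rw [h] at hsub
    have : (μ + f (p i) (p i)) * (x i - x j) = 0 := by
      simp only [Pi.smul_apply, smul_eq_mul] at hsub; linear_combination hsub
    exact ⟨p i, eq_neg_of_add_eq_zero_left
      ((mul_eq_zero.1 this).resolve_right (sub_ne_zero.2 hne))⟩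

theorem exists_eigenvector_blowupMatrix (hp : Function.Surjective p) {μ : R}
    (h : (μ • 1 - quotientMatrix p f).det = 0) :
    ∃ x ≠ 0, blowupMatrix p f *ᵥ x = μ • x := by
  obtain ⟨y, hy, hQ⟩ := det_smul_one_sub_eq_zero_iff.1 h
  refine ⟨y ∘ p, fun h0 => hy (funext fun c => ?_), ?_⟩
  · obtain ⟨i, rfl⟩ := hp c
    exact congrFun h0 i
  · rw [blowupMatrix_mulVec_comp, hQ]
    rfl

end Blowup

section Dist

variable {V : Type*} {G : SimpleGraph V} {i j : V}

lemma dist_eq_two_of_adj_of_adj {w : V} (hij : i ≠ j) (hnadj : ¬G.Adj i j) (hiw : G.Adj i w)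
    (hwj : G.Adj w j) : G.dist i j = 2 := by
  have : G.edist i j = 2 := edist_eq_two_iff.2 ⟨hij, hnadj, w, hiw, hwj.symm⟩
  simp [SimpleGraph.dist, this]

lemma dist_eq_three_of_adj_of_adj_of_adj {w₁ w₂ : V} (hnadj : ¬G.Adj i j)
    (hnc : ∀ w, G.Adj i w → ¬G.Adj w j) (h₁ : G.Adj i w₁) (h₂ : G.Adj w₁ w₂)
    (h₃ : G.Adj w₂ j) :
    G.dist i j = 3 := by
  have hij : i ≠ j := by rintro rfl; exact hnc w₁ h₁ h₁.symm
  have hlt : 2 < G.edist i j := two_lt_edist_iff.2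
    ⟨hij, hnadj, Set.eq_empty_iff_forall_notMem.2 fun w hw => hnc w hw.1 hw.2.symm⟩
  have hle : G.edist i j ≤ 3 := by
    simpa using (Walk.cons h₁ (Walk.cons h₂ (Walk.cons h₃ Walk.nil))).edist_le
  have : G.edist i j = 3 := le_antisymm hle (Order.add_one_le_of_lt hlt)
  simp [SimpleGraph.dist, this]

end Dist

lemma card_filter_fin_eq {N : ℕ} {P : Fin N → Prop} [DecidablePred P] {S : Finset ℕ}
    (h : ∀ j : Fin N, P j ↔ j.val ∈ S) (hS : ∀ k ∈ S, k < N) : #{j | P j} = #S := by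
  rw [← card_map Fin.valEmbedding]
  congr 1
  ext k
  simp only [mem_map, mem_filter, mem_univ, true_and, Fin.valEmbedding_apply]
  exact ⟨fun ⟨j, hj, hk⟩ => hk ▸ (h j).1 hj,
    fun hk => ⟨⟨k, hS k hk⟩, (h _).2 hk, rfl⟩⟩

lemma exists_root_gt_of_neg {f : ℝ → ℝ} (hf : Continuous f) {a b : ℝ} (ha : f a < 0)
    (hb : ∀ x, b ≤ x → 0 < f x) : ∃ x, a < x ∧ f x = 0 := by
  obtain ⟨x, hx, hfx⟩ := intermediate_value_Icc (le_max_left a b) hf.continuousOn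
    ⟨ha.le, (hb _ (le_max_right a b)).le⟩
  exact ⟨x, lt_of_le_of_ne hx.1 (by rintro rfl; exact ha.ne hfx), hfx⟩

section DoubleStarPoly

/- The characteristic polynomial of the quotient matrix of `H(s,t)ᶜ`, with `m = s + t`,
`P = s * t`. -/
def doubleStarPoly (m P : ℕ) (x : ℝ) : ℝ :=
  x ^ 4 - (2 * m - 4) * x ^ 3 - (9 * m + 5 * P - 3) * x ^ 2 - (12 * m + 4 * P + 4) * x
    - (4 * m + 4)

noncomputable def doubleStarRadius (m P : ℕ) : ℝ := sSup {x | doubleStarPoly m P x = 0}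

variable {m P : ℕ}

lemma continuous_doubleStarPoly : Continuous (doubleStarPoly m P) := by
  unfold doubleStarPoly; fun_prop

lemma doubleStarPoly_pos_of_le {x : ℝ} (hx : 16 + 27 * m + 9 * P ≤ x) :
    0 < doubleStarPoly m P x := by
  have hm : (0 : ℝ) ≤ m := m.cast_nonneg
  have hP : (0 : ℝ) ≤ P := P.cast_nonneg
  have hx1 : 1 ≤ x := by linarith
  have hx2 : x ≤ x ^ 2 := by nlinarith
  have hx3 : x ^ 2 ≤ x ^ 3 := by nlinarith
  unfold doubleStarPoly
  nlinarith [mul_le_mul_of_nonneg_left hx (by positivity : (0 : ℝ) ≤ x ^ 3)]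

lemma doubleStarPoly_zero_neg : doubleStarPoly m P 0 < 0 := by
  have : (0 : ℝ) ≤ m := m.cast_nonneg
  unfold doubleStarPoly; linarith

lemma exists_doubleStarPoly_root_gt {a : ℝ} (ha : doubleStarPoly m P a < 0) :
    ∃ x, a < x ∧ doubleStarPoly m P x = 0 :=
  exists_root_gt_of_neg continuous_doubleStarPoly ha fun _ => doubleStarPoly_pos_of_le

lemma isGreatest_doubleStarRadius :
    IsGreatest {x | doubleStarPoly m P x = 0} (doubleStarRadius m P) := by
  have hbdd : BddAbove {x | doubleStarPoly m P x = 0} :=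
    ⟨16 + 27 * m + 9 * P, fun x hx => not_lt.1 fun h => (doubleStarPoly_pos_of_le h.le).ne' hx⟩
  obtain ⟨x, -, hx⟩ := exists_doubleStarPoly_root_gt doubleStarPoly_zero_neg
  exact ⟨(isClosed_eq continuous_doubleStarPoly continuous_const).csSup_mem ⟨x, hx⟩ hbdd,
    fun _ hy => le_csSup hbdd hy⟩

lemma doubleStarRadius_pos : 0 < doubleStarRadius m P := by
  obtain ⟨x, hx0, hx⟩ := exists_doubleStarPoly_root_gt doubleStarPoly_zero_neg
  exact hx0.trans_le (isGreatest_doubleStarRadius.2 hx)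

lemma strictMono_doubleStarRadius (m : ℕ) : StrictMono (doubleStarRadius m) := by
  intro P P' hPP'
  set r := doubleStarRadius m P
  have hr : doubleStarPoly m P r = 0 := isGreatest_doubleStarRadius.1
  have hr0 : 0 < r := doubleStarRadius_pos
  have hlt : (P : ℝ) < P' := by exact_mod_cast hPP'
  have hneg : doubleStarPoly m P' r < 0 := by
    have : doubleStarPoly m P' r
        = doubleStarPoly m P r - ((P' : ℝ) - P) * (5 * r ^ 2 + 4 * r) := by
      unfold doubleStarPoly; ring
    rw [this, hr]; nlinarith
  obtain ⟨x, hrx, hx⟩ := exists_doubleStarPoly_root_gt hneg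
  exact hrx.trans_le (isGreatest_doubleStarRadius.2 hx)

end DoubleStarPoly

section Hgraph

/- `H(s,t)ᶜ` is the path `A – v – u – B` with its end vertices blown up to the independent
sets `A = {i < s}` and `B = {s ≤ i < s + t}`; `Hpos` is the position of a vertex on that
path. -/
def Hpos (s t : ℕ) (i : Fin (s + t + 2)) : Fin 4 :=
  if i.val < s then 0 else if i.val < s + t then 3 else if i.val = s + t then 2 else 1

/- Distinct vertices at the same position are twins, at distance `2`. -/
def pathBlowupDist (a b : ℕ) : ℕ := if a = b then 2 else max a b - min a b

variable {s t : ℕ}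

lemma compl_Hgraph_adj {i j : Fin (s + t + 2)} :
    (Hgraph s t)ᶜ.Adj i j ↔
      (Hpos s t i : ℕ) + 1 = Hpos s t j ∨ (Hpos s t j : ℕ) + 1 = Hpos s t i := by
  have := i.isLt; have := j.isLt
  simp only [compl_adj, Hgraph, fromRel_adj, ne_eq, Fin.ext_iff, Hpos]
  split_ifs <;> simp <;> omega

lemma eq_of_Hpos_eq {i j : Fin (s + t + 2)} (h : Hpos s t i = Hpos s t j)
    (hmid : (Hpos s t i : ℕ) = 1 ∨ (Hpos s t i : ℕ) = 2) : i = j := by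
  have := i.isLt; have := j.isLt
  simp only [Hpos] at h hmid
  ext
  split_ifs at h hmid <;> simp at h hmid ⊢ <;> omega

lemma dist_compl_Hgraph {i j : Fin (s + t + 2)} (hij : i ≠ j) :
    (Hgraph s t)ᶜ.dist i j = pathBlowupDist (Hpos s t i) (Hpos s t j) := by
  set u : Fin (s + t + 2) := ⟨s + t, by omega⟩
  set v : Fin (s + t + 2) := ⟨s + t + 1, by omega⟩
  have hu : (Hpos s t u : ℕ) = 2 := by simp [u, Hpos]
  have hv : (Hpos s t v : ℕ) = 1 := by
    simp only [v, Hpos]; rw [if_neg (by omega), if_neg (by omega), if_neg (by omega)]; rfl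
  have hmid := fun h hm => hij (eq_of_Hpos_eq (i := i) (j := j) (Fin.ext h) hm)
  have hi := (Hpos s t i).isLt
  have hj := (Hpos s t j).isLt
  unfold pathBlowupDist
  -- each pair of positions is settled by adjacency, a common neighbour `u` or `v`, or the path
  -- through `v` and `u`
  interval_cases a : (Hpos s t i : ℕ) <;> interval_cases b : (Hpos s t j : ℕ)
  all_goals first
    | exact (hmid (by omega) (by omega)).elim
    | exact dist_eq_one_iff_adj.2 (compl_Hgraph_adj.2 (by omega))
    | exact dist_eq_two_of_adj_of_adj (w := v) hij (by rw [compl_Hgraph_adj]; omega)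
        (compl_Hgraph_adj.2 (by omega)) (compl_Hgraph_adj.2 (by omega))
    | exact dist_eq_two_of_adj_of_adj (w := u) hij (by rw [compl_Hgraph_adj]; omega)
        (compl_Hgraph_adj.2 (by omega)) (compl_Hgraph_adj.2 (by omega))
    | exact dist_eq_three_of_adj_of_adj_of_adj (w₁ := v) (w₂ := u)
        (by rw [compl_Hgraph_adj]; omega)
        (fun w h₁ h₂ => by rw [compl_Hgraph_adj] at h₁ h₂; omega)
        (compl_Hgraph_adj.2 (by omega)) (compl_Hgraph_adj.2 (by omega))
        (compl_Hgraph_adj.2 (by omega))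
    | exact dist_eq_three_of_adj_of_adj_of_adj (w₁ := u) (w₂ := v)
        (by rw [compl_Hgraph_adj]; omega)
        (fun w h₁ h₂ => by rw [compl_Hgraph_adj] at h₁ h₂; omega)
        (compl_Hgraph_adj.2 (by omega)) (compl_Hgraph_adj.2 (by omega))
        (compl_Hgraph_adj.2 (by omega))

lemma distMatrix_compl_Hgraph :
    distMatrix (Hgraph s t)ᶜ = blowupMatrix (Hpos s t) fun a b => (pathBlowupDist a b : ℝ) := by
  ext i j
  by_cases h : i = j
  · simp [distMatrix, blowupMatrix, h]
  · simp [distMatrix, blowupMatrix, h, dist_compl_Hgraph h]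

lemma surjective_Hpos (hs : 0 < s) (ht : 0 < t) : Function.Surjective (Hpos s t) := by
  intro c
  fin_cases c
  · exact ⟨⟨0, by omega⟩, by simp [Hpos, hs]⟩
  · exact ⟨⟨s + t + 1, by omega⟩, by simp [Hpos]; omega⟩
  · exact ⟨⟨s + t, by omega⟩, by simp [Hpos]⟩
  · exact ⟨⟨s, by omega⟩, by simp [Hpos, ht]⟩

lemma card_Hpos_fiber (c : Fin 4) : Fintype.card {j // Hpos s t j = c} = ![s, 1, 1, t] c := by
  rw [Fintype.card_subtype]
  fin_cases c
  · simpa using card_filter_fin_eq (S := range s)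
      (fun j => by have := j.isLt; simp [Hpos]; split_ifs <;> simp) (by simp; omega)
  · simpa using card_filter_fin_eq (S := {s + t + 1})
      (fun j => by have := j.isLt; simp [Hpos]; split_ifs <;> simp <;> omega) (by simp)
  · simpa using card_filter_fin_eq (S := {s + t})
      (fun j => by have := j.isLt; simp [Hpos]; split_ifs <;> simp <;> omega) (by simp)
  · simpa using card_filter_fin_eq (S := Ico s (s + t))
      (fun j => by have := j.isLt; simp [Hpos]; split_ifs <;> simp <;> omega) (by simp; omega)

lemma det_quotientMatrix_Hpos (x : ℝ) :
    (x • 1 - quotientMatrix (Hpos s t) (fun a b => (pathBlowupDist a b : ℝ))).det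
      = doubleStarPoly (s + t) (s * t) x := by
  have hQ : quotientMatrix (Hpos s t) (fun a b => (pathBlowupDist a b : ℝ)) =
      !![2 * ((s : ℝ) - 1), 1, 2, 3 * t;
         s, 0, 1, 2 * t;
         2 * s, 1, 0, t;
         3 * s, 2, 1, 2 * ((t : ℝ) - 1)] := by
    ext a b
    fin_cases a <;> fin_cases b <;>
      norm_num [quotientMatrix, card_Hpos_fiber, pathBlowupDist] <;> ring
  rw [hQ, det_succ_row_zero]
  simp [Fin.sum_univ_succ, det_fin_three, Fin.succAbove, one_apply, doubleStarPoly]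
  ring

theorem lam1_compl_Hgraph (hs : 0 < s) (ht : 0 < t) :
    lam1 (Hgraph s t)ᶜ = doubleStarRadius (s + t) (s * t) := by
  have hp := surjective_Hpos hs ht
  unfold lam1
  rw [distMatrix_compl_Hgraph]
  refine IsGreatest.csSup_eq ⟨exists_eigenvector_blowupMatrix hp ?_, ?_⟩
  · rw [det_quotientMatrix_Hpos]
    exact isGreatest_doubleStarRadius.1
  · rintro μ ⟨x, hx, h⟩
    rcases eigenvalue_blowupMatrix_cases hp hx h with ⟨c, rfl⟩ | hdet
    · have h2 : pathBlowupDist c c = 2 := if_pos rfl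
      rw [h2, Nat.cast_ofNat]
      linarith [doubleStarRadius_pos (m := s + t) (P := s * t)]
    · rw [det_quotientMatrix_Hpos] at hdet
      exact isGreatest_doubleStarRadius.2 hdet

end Hgraph

lemma mul_le_balanced_mul_of_add_eq {s t a b : ℕ} (h : s + t = a + b) (hab : a ≤ b)
    (hba : b ≤ a + 1) :
    s * t ≤ a * b ∧ (s * t = a * b ↔ s = a ∧ t = b ∨ s = b ∧ t = a) := by
  obtain ⟨d, hd⟩ : ∃ d : ℤ, (s : ℤ) = a + d := ⟨s - a, by ring⟩
  have ht : (t : ℤ) = b - d := by omega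
  have key : (s : ℤ) * t = a * b - d * (d - (b - a)) := by rw [hd, ht]; ring
  have hnn : 0 ≤ d * (d - (b - a)) := by
    rcases (by omega : (b : ℤ) - a = 0 ∨ (b : ℤ) - a = 1) with h | h <;> rw [h]
    · nlinarith [sq_nonneg d]
    · rcases (by omega : d ≤ 0 ∨ 1 ≤ d) with h | h <;> nlinarith
  refine ⟨by zify; linarith, fun he => ?_, ?_⟩
  · zify at he
    have : d * (d - (b - a)) = 0 := by linarith
    rcases mul_eq_zero.1 this with h | h <;> omega
  · rintro (⟨rfl, rfl⟩ | ⟨rfl, rfl⟩) <;> ring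

theorem stmt_3_general (n s t : ℕ) (hs : 0 < s) (ht : 0 < t) (hst : s + t = n - 2) :
    lam1 (Hgraph s t)ᶜ ≤ lam1 (Hgraph (n / 2 - 1) ((n + 1) / 2 - 1))ᶜ ∧
    (lam1 (Hgraph s t)ᶜ = lam1 (Hgraph (n / 2 - 1) ((n + 1) / 2 - 1))ᶜ ↔
      (s = n / 2 - 1 ∧ t = (n + 1) / 2 - 1) ∨ (s = (n + 1) / 2 - 1 ∧ t = n / 2 - 1)) := by
  have hsum : n / 2 - 1 + ((n + 1) / 2 - 1) = s + t := by omega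
  rw [lam1_compl_Hgraph hs ht, lam1_compl_Hgraph (by omega) (by omega), hsum,
    (strictMono_doubleStarRadius _).le_iff_le, (strictMono_doubleStarRadius _).injective.eq_iff]
  exact mul_le_balanced_mul_of_add_eq hsum.symm (by omega) (by omega)

/-- For `n ≥ 5` and positive `s, t` with `s + t = n - 2`,
`λ₁(H(s,t)ᶜ) ≤ λ₁(H(⌊n/2⌋-1, ⌈n/2⌉-1)ᶜ)`, with equality iff
`{s,t} = {⌊n/2⌋-1, ⌈n/2⌉-1}`. -/
theorem stmt_3 (n s t : ℕ) (hn : 5 ≤ n) (hs : 0 < s) (ht : 0 < t) (hst : s + t = n - 2) :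
    lam1 (Hgraph s t)ᶜ ≤ lam1 (Hgraph (n / 2 - 1) ((n + 1) / 2 - 1))ᶜ ∧
    (lam1 (Hgraph s t)ᶜ = lam1 (Hgraph (n / 2 - 1) ((n + 1) / 2 - 1))ᶜ ↔
      (s = n / 2 - 1 ∧ t = (n + 1) / 2 - 1) ∨ (s = (n + 1) / 2 - 1 ∧ t = n / 2 - 1)) :=
  stmt_3_general n s t hs ht hst
end

section
/- Let G be a connected simple graph on n ≥ 7 vertices of diameter greater than 3 whose complement G^c is connected. Suppose there is a unit eigenvector x of D(G^c) corresponding to λ_min(G^c) that has exactly one negative entry. Then λ_min(G^c) ≥ λ_min(T^c(n-3,1)). -/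
open SimpleGraph Finset

/-!
Since `G` has diameter greater than 3, any two vertices adjacent in `G` have a common neighbour
in `Gᶜ`, so `D(Gᶜ) = J - I + A(G)` and the eigen-equation reads `(A(G) x)_v = (λ + 1) x_v - s`
with `s = ∑ x`. If `w` is the only vertex with `x_w < 0`, then `(A(G) x)_w ≤ s - x_w`, while
`(A(G) x)_q ≥ 0` at any `q ≠ w` not adjacent to `w`. For `λ < -2` the second inequality forces
`s ≤ 0` and the first `(λ + 2) x_w ≤ 2 s`, which is impossible; hence `λ ≥ -2`.
Conversely, the two centres of `T(n-3,1)` are at distance at least 2 in the complement, and the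
Rayleigh quotient of `e_0 - e_1` shows `λ_min(T(n-3,1)ᶜ) ≤ -2`.
-/

open Matrix

namespace SimpleGraph

variable {V : Type*} {G : SimpleGraph V}

theorem edist_le_three_of_dominating {u v : V} (huv : G.edist u v ≤ 1)
    (hdom : ∀ z, G.edist z u ≤ 1 ∨ G.edist z v ≤ 1) (a b : V) : G.edist a b ≤ 3 := by
  have hnear : ∀ z, ∃ c, (c = u ∨ c = v) ∧ G.edist z c ≤ 1 := fun z => by
    rcases hdom z with h | h
    exacts [⟨u, .inl rfl, h⟩, ⟨v, .inr rfl, h⟩]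
  obtain ⟨c, hc, hac⟩ := hnear a
  obtain ⟨d, hd, hbd⟩ := hnear b
  have hcd : G.edist c d ≤ 1 := by
    rcases hc with rfl | rfl <;> rcases hd with rfl | rfl
    exacts [by simp, huv, by rwa [edist_comm], by simp]
  calc G.edist a b ≤ G.edist a c + G.edist c d + G.edist d b :=
        G.edist_triangle.trans (by gcongr; exact G.edist_triangle)
    _ ≤ 1 + 1 + 1 := by gcongr; rwa [edist_comm]
    _ = 3 := by norm_num

variable {u₀ v₀ : V}

theorem compl_commonNeighbors_nonempty (h : 3 < G.dist u₀ v₀) {u v : V} (huv : G.Adj u v) :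
    (Gᶜ.commonNeighbors u v).Nonempty := by
  by_contra! hempty
  refine (ENat.toNat_le_of_le_natCast (edist_le_three_of_dominating
    (edist_le_one_iff_adj_or_eq.mpr (.inl huv)) (fun z => ?_) u₀ v₀)).not_gt h
  simp only [edist_le_one_iff_adj_or_eq]
  by_contra! hz
  have hzu : Gᶜ.Adj u z := (compl_adj G u z).mpr ⟨Ne.symm hz.1.2, fun h => hz.1.1 h.symm⟩
  have hzv : Gᶜ.Adj v z := (compl_adj G v z).mpr ⟨Ne.symm hz.2.2, fun h => hz.2.1 h.symm⟩
  exact hempty.subset ⟨hzu, hzv⟩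

theorem exists_compl_adj (h : 3 < G.dist u₀ v₀) (w : V) : ∃ q, Gᶜ.Adj w q := by
  by_contra! hnone
  refine (ENat.toNat_le_of_le_natCast (edist_le_three_of_dominating (u := w) (v := w)
    (by simp) (fun z => ?_) u₀ v₀)).not_gt h
  simp only [or_self, edist_le_one_iff_adj_or_eq]
  by_contra! hz
  exact hnone z ((compl_adj G w z).mpr ⟨Ne.symm hz.2, fun h => hz.1 h.symm⟩)

theorem dist_compl_of_adj (h : 3 < G.dist u₀ v₀) {u v : V} (huv : G.Adj u v) :
    Gᶜ.dist u v = 2 := by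
  have : Gᶜ.edist u v = 2 :=
    edist_eq_two_iff.mpr ⟨huv.ne, fun h' => ((compl_adj G u v).mp h').2 huv,
      compl_commonNeighbors_nonempty h huv⟩
  simp [dist, this]

theorem dist_compl_of_not_adj {u v : V} (hne : u ≠ v) (huv : ¬G.Adj u v) : Gᶜ.dist u v = 1 :=
  dist_eq_one_iff_adj.mpr ((compl_adj G u v).mpr ⟨hne, huv⟩)

end SimpleGraph

namespace Matrix.IsHermitian

variable {V : Type*} [Fintype V] [DecidableEq V] {M : Matrix V V ℝ} (hM : M.IsHermitian)

theorem eigenvectorUnitary_mul_transpose :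
    (hM.eigenvectorUnitary : Matrix V V ℝ) * (hM.eigenvectorUnitary : Matrix V V ℝ)ᵀ = 1 := by
  simpa [star_eq_conjTranspose] using (mem_unitaryGroup_iff.mp hM.eigenvectorUnitary.2)

theorem dotProduct_mulVec_eq_sum (x : V → ℝ) :
    x ⬝ᵥ M *ᵥ x =
      ∑ i, hM.eigenvalues i * ((hM.eigenvectorUnitary : Matrix V V ℝ)ᵀ *ᵥ x) i ^ 2 := by
  set U : Matrix V V ℝ := ↑hM.eigenvectorUnitary
  have hsp : M = U * diagonal (RCLike.ofReal ∘ hM.eigenvalues) * Uᵀ := by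
    simpa [Unitary.conjStarAlgAut_apply, star_eq_conjTranspose] using hM.spectral_theorem
  calc x ⬝ᵥ M *ᵥ x = (Uᵀ *ᵥ x) ⬝ᵥ diagonal (RCLike.ofReal ∘ hM.eigenvalues) *ᵥ (Uᵀ *ᵥ x) := by
        conv_lhs => rw [hsp]
        rw [← mulVec_mulVec, ← mulVec_mulVec, dotProduct_mulVec, ← mulVec_transpose]
    _ = _ := by
        simp only [dotProduct, mulVec_diagonal, Function.comp, RCLike.ofReal_real_eq_id, id_eq]
        exact Finset.sum_congr rfl fun i _ => by ring

theorem dotProduct_self_eq_sum (x : V → ℝ) :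
    x ⬝ᵥ x = ∑ i, ((hM.eigenvectorUnitary : Matrix V V ℝ)ᵀ *ᵥ x) i ^ 2 := by
  set U : Matrix V V ℝ := ↑hM.eigenvectorUnitary
  have : (Uᵀ *ᵥ x) ⬝ᵥ (Uᵀ *ᵥ x) = x ⬝ᵥ x := by
    rw [mulVec_transpose, ← dotProduct_mulVec, mulVec_vecMul,
      hM.eigenvectorUnitary_mul_transpose, one_mulVec]
  rw [← this]
  simp [dotProduct, sq]

theorem inf'_eigenvalues_mul_le [Nonempty V] (x : V → ℝ) :
    Finset.univ.inf' Finset.univ_nonempty hM.eigenvalues * (x ⬝ᵥ x) ≤ x ⬝ᵥ M *ᵥ x := by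
  rw [hM.dotProduct_mulVec_eq_sum, hM.dotProduct_self_eq_sum, Finset.mul_sum]
  exact Finset.sum_le_sum fun i _ =>
    mul_le_mul_of_nonneg_right (Finset.inf'_le _ (Finset.mem_univ i)) (sq_nonneg _)

end Matrix.IsHermitian

theorem Matrix.IsHermitian.sInf_eigenvalues_mul_le {V : Type*} [Fintype V] [DecidableEq V]
    {M : Matrix V V ℝ} (hM : M.IsHermitian) (x : V → ℝ) :
    sInf {μ : ℝ | ∃ y : V → ℝ, y ≠ 0 ∧ M *ᵥ y = μ • y} * (x ⬝ᵥ x) ≤ x ⬝ᵥ M *ᵥ x := by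
  rcases isEmpty_or_nonempty V with hV | hV
  · simp [dotProduct]
  set μ₀ := Finset.univ.inf' Finset.univ_nonempty hM.eigenvalues
  have hmem : μ₀ ∈ {μ : ℝ | ∃ y : V → ℝ, y ≠ 0 ∧ M *ᵥ y = μ • y} := by
    obtain ⟨i, -, hi⟩ := Finset.exists_mem_eq_inf' Finset.univ_nonempty hM.eigenvalues
    refine ⟨hM.eigenvectorBasis i, fun h0 => hM.eigenvectorBasis.orthonormal.ne_zero i ?_, ?_⟩
    · ext j
      exact congrFun h0 j
    · rw [show μ₀ = hM.eigenvalues i from hi]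
      exact hM.mulVec_eigenvectorBasis i
  have hbdd : BddBelow {μ : ℝ | ∃ y : V → ℝ, y ≠ 0 ∧ M *ᵥ y = μ • y} := by
    refine ⟨μ₀, fun μ ⟨y, hy, hμ⟩ => ?_⟩
    have h := hM.inf'_eigenvalues_mul_le y
    rw [hμ, dotProduct_smul, smul_eq_mul] at h
    exact le_of_mul_le_mul_right h (by simpa using dotProduct_star_self_pos_iff.mpr hy)
  have hxx : 0 ≤ x ⬝ᵥ x := by simpa using dotProduct_star_self_nonneg x
  calc _ ≤ μ₀ * (x ⬝ᵥ x) := mul_le_mul_of_nonneg_right (csInf_le hbdd hmem) hxx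
    _ ≤ x ⬝ᵥ M *ᵥ x := hM.inf'_eigenvalues_mul_le x

section DistMatrix

variable {V : Type*} [Fintype V]

theorem isHermitian_distMatrix (H : SimpleGraph V) : (distMatrix H).IsHermitian := by
  ext u v
  simp [distMatrix, SimpleGraph.dist_comm]

variable [DecidableEq V] {G : SimpleGraph V} [DecidableRel G.Adj] {u₀ v₀ : V}

theorem distMatrix_compl_eq (h : 3 < G.dist u₀ v₀) :
    distMatrix Gᶜ = Matrix.of (fun _ _ => 1) - 1 + G.adjMatrix ℝ := by
  ext u v
  by_cases huv : u = v
  · subst huv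
    simp [distMatrix]
  by_cases hadj : G.Adj u v
  · simp [distMatrix, SimpleGraph.dist_compl_of_adj h hadj, huv, hadj]
    norm_num
  · simp [distMatrix, SimpleGraph.dist_compl_of_not_adj huv hadj, huv, hadj]

theorem mulVec_distMatrix_compl_apply (h : 3 < G.dist u₀ v₀) (x : V → ℝ) (v : V) :
    (distMatrix Gᶜ *ᵥ x) v = ∑ u, x u - x v + ∑ u ∈ G.neighborFinset v, x u := by
  rw [distMatrix_compl_eq h, add_mulVec, sub_mulVec, one_mulVec]
  simp [mulVec, dotProduct, neighborFinset_eq_filter, Finset.sum_filter]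

end DistMatrix

theorem lamMin_le_neg_dist {V : Type*} [Fintype V] (H : SimpleGraph V) {u v : V} (huv : u ≠ v) :
    lamMin H ≤ -(H.dist u v : ℝ) := by
  classical
  set y : V → ℝ := Pi.single u 1 - Pi.single v 1
  have hyy : y ⬝ᵥ y = 2 := by
    simp [y, dotProduct_sub, huv, huv.symm]
    norm_num
  have hyDy : y ⬝ᵥ distMatrix H *ᵥ y = -2 * H.dist u v := by
    simp [y, sub_dotProduct, dotProduct_sub, mulVec_sub, distMatrix, SimpleGraph.dist_comm (u := v)]
    ring
  have := (isHermitian_distMatrix H).sInf_eigenvalues_mul_le y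
  rw [hyy, hyDy] at this
  change lamMin H * 2 ≤ _ at this
  linarith

theorem two_le_dist_compl_Tdouble {a : ℕ} (ha : 1 ≤ a) :
    2 ≤ (Tdouble a 1)ᶜ.dist ⟨0, by omega⟩ ⟨1, by omega⟩ := by
  have hadj : ∀ i j : Fin (a + 1 + 2), (Tdouble a 1)ᶜ.Adj i j ↔ i.val ≠ j.val ∧
      ¬((i.val = 0 ∧ j.val = 1) ∨ (i.val = 0 ∧ 2 ≤ j.val ∧ j.val < a + 2) ∨
        (i.val = 1 ∧ a + 2 ≤ j.val) ∨ (j.val = 0 ∧ i.val = 1) ∨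
        (j.val = 0 ∧ 2 ≤ i.val ∧ i.val < a + 2) ∨ (j.val = 1 ∧ a + 2 ≤ i.val)) := by
    intro i j
    simp only [compl_adj, Tdouble, fromRel_adj, ne_eq, Fin.val_inj]
    tauto
  have h1 : (Tdouble a 1)ᶜ.Adj ⟨0, by omega⟩ ⟨a + 2, by omega⟩ := by rw [hadj]; dsimp only; omega
  have h2 : (Tdouble a 1)ᶜ.Adj ⟨a + 2, by omega⟩ ⟨2, by omega⟩ := by rw [hadj]; dsimp only; omega
  have h3 : (Tdouble a 1)ᶜ.Adj ⟨2, by omega⟩ ⟨1, by omega⟩ := by rw [hadj]; dsimp only; omega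
  have h01 : ¬(Tdouble a 1)ᶜ.Adj ⟨0, by omega⟩ ⟨1, by omega⟩ := by rw [hadj]; dsimp only; omega
  exact (h1.reachable.trans (h2.reachable.trans h3.reachable)).one_lt_dist_of_ne_of_not_adj
    (by simp) h01

theorem exists_neg_forall_ne_nonneg {α : Type*} [Fintype α] {x : α → ℝ}
    (hneg : (Finset.univ.filter fun v => x v < 0).card = 1) :
    ∃ w, x w < 0 ∧ ∀ v ≠ w, 0 ≤ x v := by
  obtain ⟨w, hw⟩ := Finset.card_eq_one.mp hneg
  have hmem : ∀ v, x v < 0 ↔ v = w := fun v => by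
    simpa using Finset.ext_iff.mp hw v
  exact ⟨w, (hmem w).mpr rfl, fun v hv => not_lt.mp fun h => hv ((hmem v).mp h)⟩

theorem neg_two_le_of_mulVec_distMatrix_compl_eq_smul {V : Type*} [Fintype V]
    {G : SimpleGraph V} {u₀ v₀ : V} (h : 3 < G.dist u₀ v₀) {x : V → ℝ} {μ : ℝ}
    (heig : distMatrix Gᶜ *ᵥ x = μ • x) {w : V} (hw : x w < 0) (hpos : ∀ v ≠ w, 0 ≤ x v) :
    -2 ≤ μ := by
  classical
  set s := ∑ v, x v
  have hrow : ∀ v, ∑ u ∈ G.neighborFinset v, x u = (μ + 1) * x v - s := fun v => by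
    have := congrFun heig v
    rw [mulVec_distMatrix_compl_apply h, Pi.smul_apply, smul_eq_mul] at this
    linarith
  obtain ⟨q, hq⟩ := exists_compl_adj h w
  have hq_nonneg : 0 ≤ ∑ u ∈ G.neighborFinset q, x u :=
    Finset.sum_nonneg fun u hu => hpos u fun huw =>
      ((compl_adj G w q).mp hq).2 (huw ▸ (mem_neighborFinset G q u).mp hu).symm
  have hw_le : ∑ u ∈ G.neighborFinset w, x u ≤ s - x w := by
    rw [← Finset.sum_erase_eq_sub (Finset.mem_univ w)]
    exact Finset.sum_le_sum_of_subset_of_nonneg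
      (fun u hu => Finset.mem_erase.mpr ⟨(G.ne_of_adj ((mem_neighborFinset G w u).mp hu)).symm,
        Finset.mem_univ u⟩)
      (fun u hu _ => hpos u (Finset.ne_of_mem_erase hu))
  by_contra! hμ
  have hq' : (μ + 1) * x q ≤ 0 :=
    mul_nonpos_of_nonpos_of_nonneg (by linarith) (hpos q ((compl_adj G w q).mp hq).1.symm)
  have hw' : 0 < (μ + 2) * x w := mul_pos_of_neg_of_neg (by linarith) hw
  linarith [hrow q, hrow w]

theorem lamMin_compl_Tdouble_le {a : ℕ} (ha : 1 ≤ a) : lamMin (Tdouble a 1)ᶜ ≤ -2 := by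
  have hdist : (2 : ℝ) ≤ (Tdouble a 1)ᶜ.dist ⟨0, by omega⟩ ⟨1, by omega⟩ := by
    exact_mod_cast two_le_dist_compl_Tdouble ha
  linarith [lamMin_le_neg_dist (Tdouble a 1)ᶜ (u := ⟨0, by omega⟩) (v := ⟨1, by omega⟩) (by simp)]

theorem stmt_10_general {V : Type*} [Fintype V] (n : ℕ) (G : SimpleGraph V)
    (hn : 7 ≤ n)
    (hdiam : ∃ u v : V, 3 < G.dist u v)
    (x : V → ℝ)
    (heig : (distMatrix Gᶜ).mulVec x = lamMin Gᶜ • x)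
    (hneg : (Finset.univ.filter fun v : V => x v < 0).card = 1) :
    lamMin (Tdouble (n - 3) 1)ᶜ ≤ lamMin Gᶜ := by
  obtain ⟨u₀, v₀, hdiam⟩ := hdiam
  obtain ⟨w, hw, hpos⟩ := exists_neg_forall_ne_nonneg hneg
  exact (lamMin_compl_Tdouble_le (by omega)).trans
    (neg_two_le_of_mulVec_distMatrix_compl_eq_smul hdiam heig hw hpos)

/-- Let `G` be connected on `n ≥ 7` vertices of diameter `> 3` with `Gᶜ`
connected. If some unit eigenvector of `D(Gᶜ)` for `λmin(Gᶜ)` has exactly one negative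
entry, then `λmin(Gᶜ) ≥ λmin(T(n-3,1)ᶜ)`. -/
theorem stmt_10 {V : Type*} [Fintype V] [DecidableEq V] (n : ℕ) (G : SimpleGraph V)
    (hn : 7 ≤ n) (hcard : Fintype.card V = n)
    (hconn : G.Connected) (hcc : Gᶜ.Connected)
    (hdiam : ∃ u v : V, 3 < G.dist u v)
    (x : V → ℝ) (hunit : ∑ v : V, x v ^ 2 = 1)
    (heig : (distMatrix Gᶜ).mulVec x = lamMin Gᶜ • x)
    (hneg : (Finset.univ.filter fun v : V => x v < 0).card = 1) :
    lamMin (Tdouble (n - 3) 1)ᶜ ≤ lamMin Gᶜ :=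
  stmt_10_general n G hn hdiam x heig hneg
end
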